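/- arXiv:2007.07126 — 3 statements merged into one kernel-verified Lean document; each statement's English description precedes it below -/
import Mathlib

section
/- If Z(Z⁰) and S(Z⁰) are differentiable functions satisfying Z' = (1−λZ)(1−λZ⁰)/D, S' = −λS(1−λZ⁰)/D where D = (1−λZ)² + (λS)², with Z(0) = S(0) = 0 and λ ≠ 0, then (1−λZ(Z⁰))² + (λS(Z⁰))² = (1−λZ⁰)² for all Z⁰ in the domain, and consequently Z(Z⁰) = Z⁰ and S(Z⁰) = 0 identically (on a domain where 1−λZ⁰ > 0). -/
lemma const_on_aux (I : Set ℝ) (hconv : Convex ℝ I) (h0 : (0:ℝ) ∈ I) (f : ℝ → ℝ)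
    (hf : ∀ z ∈ I, HasDerivAt f 0 z) : ∀ z ∈ I, f z = f 0 := by
  intro z hz
  have h := hconv.norm_image_sub_le_of_norm_hasDerivWithin_le
    (f' := fun _ => (0:ℝ)) (C := 0)
    (fun x hx => (hf x hx).hasDerivWithinAt) (fun x hx => by simp) h0 hz
  have h2 : ‖f z - f 0‖ = 0 := le_antisymm (by simpa using h) (norm_nonneg _)
  have h3 : f z - f 0 = 0 := by simpa using h2
  linarith

theorem kirchhoff_hypothesis_leading_order (l : ℝ) (hl : l ≠ 0)
    (I : Set ℝ) (hI : I.OrdConnected) (h0 : (0 : ℝ) ∈ I)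
    (Z S : ℝ → ℝ) (hZ : Differentiable ℝ Z) (hS : Differentiable ℝ S)
    (hpos : ∀ z ∈ I, 0 < 1 - l * z)
    (hD : ∀ z ∈ I, (1 - l * Z z) ^ 2 + (l * S z) ^ 2 ≠ 0)
    (hZ' : ∀ z ∈ I, deriv Z z
      = (1 - l * Z z) * (1 - l * z) / ((1 - l * Z z) ^ 2 + (l * S z) ^ 2))
    (hS' : ∀ z ∈ I, deriv S z
      = -(l * S z) * (1 - l * z) / ((1 - l * Z z) ^ 2 + (l * S z) ^ 2))
    (hZ0 : Z 0 = 0) (hS0 : S 0 = 0) :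
    ∀ z ∈ I, (1 - l * Z z) ^ 2 + (l * S z) ^ 2 = (1 - l * z) ^ 2
      ∧ Z z = z ∧ S z = 0 := by
  have hconv : Convex ℝ I := hI.convex
  -- Step 1: the energy identity
  set F : ℝ → ℝ := fun z => (1 - l * Z z) ^ 2 + (l * S z) ^ 2 - (1 - l * z) ^ 2 with hF
  have hFd : ∀ z ∈ I, HasDerivAt F 0 z := by
    intro z hz
    have hZd : HasDerivAt Z (deriv Z z) z := (hZ z).hasDerivAt
    have hSd : HasDerivAt S (deriv S z) z := (hS z).hasDerivAt
    have h1 : HasDerivAt (fun z => (1 - l * Z z) ^ 2)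
        (2 * (1 - l * Z z) * (-(l * deriv Z z))) z := by
      have : HasDerivAt (fun z => 1 - l * Z z) (-(l * deriv Z z)) z :=
        ((hZd.const_mul l).const_sub 1)
      simpa [mul_comm, mul_assoc] using (this.fun_pow 2)
    have h2 : HasDerivAt (fun z => (l * S z) ^ 2)
        (2 * (l * S z) * (l * deriv S z)) z := by
      have : HasDerivAt (fun z => l * S z) (l * deriv S z) z := hSd.const_mul l
      simpa [mul_comm, mul_assoc] using (this.fun_pow 2)
    have h3 : HasDerivAt (fun z : ℝ => (1 - l * z) ^ 2)
        (2 * (1 - l * z) * (-l)) z := by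
      have : HasDerivAt (fun z : ℝ => 1 - l * z) (-l) z := by
        simpa using ((hasDerivAt_id z).const_mul l).const_sub 1
      simpa [mul_comm, mul_assoc] using (this.fun_pow 2)
    have hsum := (h1.add h2).sub h3
    refine hsum.congr_deriv ?_
    rw [hZ' z hz, hS' z hz]
    have hDz := hD z hz
    linear_combination (-2 * l * (1 - l * z)) * mul_inv_cancel₀ hDz
  have hFconst := const_on_aux I hconv h0 F hFd
  have hF0 : F 0 = 0 := by simp [hF, hZ0, hS0]
  have hid : ∀ z ∈ I, (1 - l * Z z) ^ 2 + (l * S z) ^ 2 = (1 - l * z) ^ 2 := by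
    intro z hz
    have := hFconst z hz
    rw [hF0] at this
    simpa [hF, sub_eq_zero] using this
  -- Step 2: S ≡ 0 via constancy of S/(1-lz)
  have hSder : ∀ z ∈ I, deriv S z = -(l * S z) / (1 - l * z) := by
    intro z hz
    rw [hS' z hz, hid z hz]
    have h := (hpos z hz).ne'
    field_simp
  have hZder : ∀ z ∈ I, deriv Z z = (1 - l * Z z) / (1 - l * z) := by
    intro z hz
    rw [hZ' z hz, hid z hz]
    have h := (hpos z hz).ne'
    field_simp
  have hGd : ∀ z ∈ I, HasDerivAt (fun z => S z / (1 - l * z)) 0 z := by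
    intro z hz
    have hne : (1 - l * z) ≠ 0 := (hpos z hz).ne'
    have hden : HasDerivAt (fun z : ℝ => 1 - l * z) (-l) z := by
      simpa using ((hasDerivAt_id z).const_mul l).const_sub 1
    have hd := ((hS z).hasDerivAt).div hden hne
    refine hd.congr_deriv ?_
    rw [hSder z hz]
    field_simp
    ring
  have hSzero : ∀ z ∈ I, S z = 0 := by
    intro z hz
    have := const_on_aux I hconv h0 _ hGd z hz
    simp [hS0] at this
    rcases this with h | h
    · exact h
    · exact absurd h (hpos z hz).ne'
  have hHd : ∀ z ∈ I, HasDerivAt (fun z => (1 - l * Z z) / (1 - l * z)) 0 z := by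
    intro z hz
    have hne : (1 - l * z) ≠ 0 := (hpos z hz).ne'
    have hden : HasDerivAt (fun z : ℝ => 1 - l * z) (-l) z := by
      simpa using ((hasDerivAt_id z).const_mul l).const_sub 1
    have hnum : HasDerivAt (fun z => 1 - l * Z z) (-(l * deriv Z z)) z :=
      (((hZ z).hasDerivAt).const_mul l).const_sub 1
    have hd := hnum.div hden hne
    refine hd.congr_deriv ?_
    rw [hZder z hz]
    field_simp
    ring
  have hZeq : ∀ z ∈ I, Z z = z := by
    intro z hz
    have := const_on_aux I hconv h0 _ hHd z hz
    have hne : (1 - l * z) ≠ 0 := (hpos z hz).ne'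
    rw [hZ0] at this
    norm_num at this
    have h1 : 1 - l * Z z = 1 - l * z := by
      rw [div_eq_one_iff_eq hne] at this
      exact this
    have h2 : l * Z z = l * z := by linarith
    exact mul_left_cancel₀ hl h2
  intro z hz
  exact ⟨hid z hz, hZeq z hz, hSzero z hz⟩
end

section
/- For K⁰ > 0, the depressed cubic equation H + (K⁰/12)H³ = h (in the unknown H) has a unique positive real solution for every h > 0; for −16/9 < h²K⁰ < 0 it has exactly two positive real solutions; and for h²K⁰ < −16/9 it has no positive real solution. -/
private lemma cubic_cont (K : ℝ) : Continuous (fun H : ℝ => H + K / 12 * H ^ 3) := by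
  continuity

private lemma cubic_strictMono (K : ℝ) (hK : 0 < K) :
    StrictMono (fun H : ℝ => H + K / 12 * H ^ 3) := by
  intro a b hab
  simp only
  nlinarith [sq_nonneg (a + b), sq_nonneg (a - b), sq_nonneg a, sq_nonneg b,
    mul_pos hK (sub_pos.2 hab)]

private lemma cubic_monoOn (K s : ℝ) (hs : 0 < s) (hs2 : s ^ 2 = -K) :
    StrictMonoOn (fun H : ℝ => H + K / 12 * H ^ 3) (Set.Icc 0 (2 / s)) := by
  intro a ha b hb hab
  simp only
  have ha0 : 0 ≤ a := ha.1
  have hb0 : 0 ≤ b := lt_of_le_of_lt ha0 hab |>.le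
  have has : a * s < 2 := by
    have := hb.2
    have : b * s ≤ 2 := by rwa [← le_div_iff₀ hs]
    nlinarith
  have hbs : b * s ≤ 2 := by
    have := hb.2
    rwa [← le_div_iff₀ hs]
  have hKs : K = -s ^ 2 := by linarith
  rw [hKs]
  have has0 : 0 ≤ a * s := mul_nonneg ha0 hs.le
  have hbs0 : 0 ≤ b * s := mul_nonneg hb0 hs.le
  have k1 : 0 < (2 - a * s) * (2 + a * s) := mul_pos (by linarith) (by linarith)
  have k2 : 0 ≤ (2 - b * s) * (2 + b * s) := mul_nonneg (by linarith) (by linarith)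
  have k3 : 0 ≤ (2 - a * s) * (b * s) := mul_nonneg (by linarith) hbs0
  have key : 0 < (b - a) * (12 - s ^ 2 * (a ^ 2 + a * b + b ^ 2)) :=
    mul_pos (by linarith) (by nlinarith [k1, k2, k3])
  nlinarith [key]

private lemma cubic_antiOn (K s : ℝ) (hs : 0 < s) (hs2 : s ^ 2 = -K) :
    StrictAntiOn (fun H : ℝ => H + K / 12 * H ^ 3) (Set.Ici (2 / s)) := by
  intro a ha b hb hab
  simp only
  have ha' : 2 / s ≤ a := ha
  have has : 2 ≤ a * s := by rwa [div_le_iff₀ hs] at ha'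
  have hbs : 2 < b * s := by
    have : 2 / s < b := lt_of_le_of_lt ha' hab
    rwa [div_lt_iff₀ hs] at this
  have ha0 : 0 < a := lt_of_lt_of_le (by positivity) ha'
  have hKs : K = -s ^ 2 := by linarith
  rw [hKs]
  have k1 : 0 ≤ (a * s - 2) * (a * s + 2) := mul_nonneg (by linarith) (by linarith)
  have k2 : 0 < (b * s - 2) * (b * s + 2) := mul_pos (by linarith) (by linarith)
  have k3 : 0 ≤ (a * s - 2) * (b * s) := mul_nonneg (by linarith) (by nlinarith)
  have key : 0 < (b - a) * (s ^ 2 * (a ^ 2 + a * b + b ^ 2) - 12) :=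
    mul_pos (by linarith) (by nlinarith [k1, k2, k3])
  nlinarith [key]

theorem depressed_cubic_positive_solutions (h K : ℝ) (hh : 0 < h) :
    (0 < K → ∃! H : ℝ, 0 < H ∧ H + K / 12 * H ^ 3 = h) ∧
    (-16 / 9 < h ^ 2 * K → h ^ 2 * K < 0 →
      ∃ H₁ H₂ : ℝ, 0 < H₁ ∧ 0 < H₂ ∧ H₁ ≠ H₂ ∧
        H₁ + K / 12 * H₁ ^ 3 = h ∧ H₂ + K / 12 * H₂ ^ 3 = h ∧
        ∀ H : ℝ, 0 < H → H + K / 12 * H ^ 3 = h → H = H₁ ∨ H = H₂) ∧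
    (h ^ 2 * K < -16 / 9 → ¬ ∃ H : ℝ, 0 < H ∧ H + K / 12 * H ^ 3 = h) := by
  set f : ℝ → ℝ := fun H => H + K / 12 * H ^ 3 with hf
  refine ⟨?_, ?_, ?_⟩
  · -- K > 0 : unique solution
    intro hK
    have hmono := cubic_strictMono K hK
    have hcont := cubic_cont K
    have h0h : (0:ℝ) ≤ h := hh.le
    have hmem : h ∈ Set.Icc (f 0) (f h) := by
      constructor
      · simp only [hf]; norm_num; linarith
      · simp only [hf]; nlinarith [mul_pos hK (pow_pos hh 3)]
    obtain ⟨H, hHmem, hfH⟩ := intermediate_value_Icc h0h hcont.continuousOn hmem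
    have hHpos : 0 < H := by
      rcases lt_or_eq_of_le hHmem.1 with h1 | h1
      · exact h1
      · exfalso; rw [← h1] at hfH; simp [hf] at hfH; linarith
    refine ⟨H, ⟨hHpos, hfH⟩, ?_⟩
    rintro y ⟨hy0, hy⟩
    have : (fun H => H + K / 12 * H ^ 3) y = (fun H => H + K / 12 * H ^ 3) H := by
      simp only; rw [hy]; exact hfH.symm
    exact hmono.injective this
  · -- two solutions case
    intro h1 h2
    have hK : K < 0 := by nlinarith [sq_nonneg h]
    set s : ℝ := Real.sqrt (-K) with hsdef
    have hs : 0 < s := Real.sqrt_pos.2 (by linarith)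
    have hs2 : s ^ 2 = -K := Real.sq_sqrt (by linarith)
    have hmono := cubic_monoOn K s hs hs2
    have hanti := cubic_antiOn K s hs hs2
    have hcont := cubic_cont K
    have hfstar : f (2 / s) = 4 / (3 * s) := by
      have hKs : K = -s ^ 2 := by linarith
      simp only [hf, hKs]
      field_simp
      ring
    -- h < 4/(3s)
    have hhs : h * s < 4 / 3 := by
      have h1' : h ^ 2 * s ^ 2 < 16 / 9 := by rw [hs2]; linarith
      nlinarith [mul_pos hh hs]
    have hlt : h < 4 / (3 * s) := by
      rw [lt_div_iff₀ (by positivity)]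
      nlinarith
    -- first root in [0, 2/s]
    have hle1 : (0:ℝ) ≤ 2 / s := by positivity
    have hmem1 : h ∈ Set.Icc (f 0) (f (2 / s)) := by
      constructor
      · simp [hf]; linarith
      · rw [hfstar]; linarith
    obtain ⟨H₁, hH₁mem, hfH₁⟩ := intermediate_value_Icc hle1 hcont.continuousOn hmem1
    -- second root in [2/s, B]
    set B : ℝ := Real.sqrt (12 / (-K)) with hBdef
    have hB2 : B ^ 2 = 12 / (-K) := Real.sq_sqrt (div_nonneg (by norm_num) (by linarith))
    have hfB : f B = 0 := by
      have : f B = B * (1 + K / 12 * B ^ 2) := by simp only [hf]; ring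
      rw [this, hB2]
      have hK0 : K ≠ 0 := hK.ne
      field_simp
      ring
    have hle2 : 2 / s ≤ B := by
      have hsq : (2 / s) ^ 2 ≤ B ^ 2 := by
        rw [hB2, div_pow, hs2, div_le_div_iff₀ (by nlinarith) (by linarith)]
        nlinarith
      exact le_of_pow_le_pow_left₀ two_ne_zero (Real.sqrt_nonneg _) hsq
    have hmem2 : h ∈ Set.Icc (f B) (f (2 / s)) := by
      rw [hfB, hfstar]
      exact ⟨hh.le, hlt.le⟩
    obtain ⟨H₂, hH₂mem, hfH₂⟩ := intermediate_value_Icc' hle2 hcont.continuousOn hmem2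
    have hfH₁' : f H₁ = h := hfH₁
    have hfH₂' : f H₂ = h := hfH₂
    have hH₁lt : H₁ < 2 / s := by
      rcases lt_or_eq_of_le hH₁mem.2 with h' | h'
      · exact h'
      · exfalso; rw [h'] at hfH₁'; rw [hfstar] at hfH₁'; linarith
    have hH₂gt : 2 / s < H₂ := by
      rcases lt_or_eq_of_le hH₂mem.1 with h' | h'
      · exact h'
      · exfalso; rw [← h'] at hfH₂'; rw [hfstar] at hfH₂'; linarith
    have hH₁pos : 0 < H₁ := by
      rcases lt_or_eq_of_le hH₁mem.1 with h' | h'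
      · exact h'
      · exfalso; rw [← h'] at hfH₁'; simp [hf] at hfH₁'; linarith
    have hH₂pos : 0 < H₂ := lt_trans (by positivity) hH₂gt
    refine ⟨H₁, H₂, hH₁pos, hH₂pos, ne_of_lt (lt_trans hH₁lt hH₂gt), hfH₁, hfH₂, ?_⟩
    intro H hHpos hfHval
    have hHne : H ≠ 2 / s := by
      intro hcon
      rw [hcon] at hfHval
      have : f (2 / s) = h := hfHval
      rw [hfstar] at this
      linarith
    rcases lt_or_gt_of_ne hHne with h' | h'
    · left
      refine hmono.injOn ⟨hHpos.le, h'.le⟩ ⟨hH₁mem.1, hH₁mem.2⟩ ?_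
      show f H = f H₁
      rw [hfH₁']; exact hfHval
    · right
      refine hanti.injOn (Set.mem_Ici.2 h'.le) (Set.mem_Ici.2 hH₂mem.1) ?_
      show f H = f H₂
      rw [hfH₂']; exact hfHval
  · -- no solution case
    intro h1
    rintro ⟨H, hHpos, hfH⟩
    have hK : K < 0 := by nlinarith [sq_nonneg h]
    set s : ℝ := Real.sqrt (-K) with hsdef
    have hs : 0 < s := Real.sqrt_pos.2 (by linarith)
    have hs2 : s ^ 2 = -K := Real.sq_sqrt (by linarith)
    have hmono := cubic_monoOn K s hs hs2
    have hanti := cubic_antiOn K s hs hs2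
    have hfstar : f (2 / s) = 4 / (3 * s) := by
      have hKs : K = -s ^ 2 := by linarith
      simp only [hf, hKs]
      field_simp
      ring
    have hhs : 4 / 3 < h * s := by
      have h1' : 16 / 9 < h ^ 2 * s ^ 2 := by rw [hs2]; nlinarith
      nlinarith [mul_pos hh hs]
    have hgt : 4 / (3 * s) < h := by
      rw [div_lt_iff₀ (by positivity)]
      nlinarith
    have hfle : f H ≤ f (2 / s) := by
      rcases le_total H (2 / s) with h' | h'
      · exact (hmono.monotoneOn ⟨hHpos.le, h'⟩ ⟨by positivity, le_refl _⟩ h')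
      · exact (hanti.antitoneOn Set.self_mem_Ici h' h')
    have hfH' : f H = h := hfH
    rw [hfH', hfstar] at hfle
    linarith
end

section
/- Let Z₁(Z⁰) = −Z⁰·[6(E_s+E_φ) − 3Z⁰(L_s + L_φ + λ(E_s+E_φ)) + 2λ L_φ (Z⁰)²] / (6(1−λZ⁰)). Then Z₁ is the unique solution with Z₁(0) = 0 of the linear ODE dZ₁/dZ⁰ − λZ₁/(1−λZ⁰) = −(E_s + E_φ) + L_φ Z⁰ + L_s Z⁰/(1−λZ⁰), on an interval where 1 − λZ⁰ > 0. -/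
private lemma hd_aux (c1 c2 c3 l z : ℝ) (hz : 6 - 6 * l * z ≠ 0) :
    HasDerivAt (fun z : ℝ => (c1 * z + c2 * z ^ 2 + c3 * z ^ 3) / (6 - 6 * l * z))
      (((c1 + c2 * (2 * z) + c3 * (3 * z ^ 2)) * (6 - 6 * l * z) -
          (c1 * z + c2 * z ^ 2 + c3 * z ^ 3) * (-(6 * l))) / (6 - 6 * l * z) ^ 2) z := by
  have hnum : HasDerivAt (fun z : ℝ => c1 * z + c2 * z ^ 2 + c3 * z ^ 3)
      (c1 + c2 * (2 * z) + c3 * (3 * z ^ 2)) z := by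
    have h1 := (hasDerivAt_id z).const_mul c1
    have h2 := (hasDerivAt_pow 2 z).const_mul c2
    have h3 := (hasDerivAt_pow 3 z).const_mul c3
    refine HasDerivAt.congr_deriv ((h1.add h2).add h3) ?_
    push_cast; ring
  have hden : HasDerivAt (fun z : ℝ => 6 - 6 * l * z) (-(6 * l)) z := by
    have := (hasDerivAt_const z (6 : ℝ)).sub ((hasDerivAt_id z).const_mul (6 * l))
    refine this.congr_deriv ?_; ring
  exact hnum.div hden hz

theorem Z1_unique_solution (Es Eφ Ls Lφ l : ℝ)
    (I : Set ℝ) (hI : I.OrdConnected) (h0 : (0 : ℝ) ∈ I)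
    (hpos : ∀ z ∈ I, 0 < 1 - l * z)
    (F : ℝ → ℝ)
    (hF : ∀ z : ℝ, F z
      = -(z * (6 * (Es + Eφ) - 3 * z * (Ls + Lφ + l * (Es + Eφ))
            + 2 * l * Lφ * z ^ 2)) / (6 * (1 - l * z))) :
    (F 0 = 0 ∧ ∀ z ∈ I, deriv F z - l * F z / (1 - l * z)
        = -(Es + Eφ) + Lφ * z + Ls * z / (1 - l * z)) ∧
      ∀ Z₁ : ℝ → ℝ, Differentiable ℝ Z₁ → Z₁ 0 = 0 →
        (∀ z ∈ I, deriv Z₁ z - l * Z₁ z / (1 - l * z)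
          = -(Es + Eφ) + Lφ * z + Ls * z / (1 - l * z)) →
        ∀ z ∈ I, Z₁ z = F z := by
  have hFeq : F = fun z : ℝ =>
      ((-(6 * (Es + Eφ))) * z + (3 * (Ls + Lφ + l * (Es + Eφ))) * z ^ 2 +
        (-(2 * (l * Lφ))) * z ^ 3) / (6 - 6 * l * z) := by
    funext z; rw [hF]; ring
  subst hFeq
  -- positivity facts
  have h6 : ∀ z ∈ I, (6 : ℝ) - 6 * l * z ≠ 0 := by
    intro z hz
    have h1 := hpos z hz
    have : (0:ℝ) < 6 * (1 - l * z) := by positivity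
    intro h; nlinarith
  have h1ne : ∀ z ∈ I, (1 : ℝ) - l * z ≠ 0 := fun z hz => ne_of_gt (hpos z hz)
  -- derivative of F at points of I
  have hFd : ∀ z ∈ I,
      HasDerivAt (fun z : ℝ =>
        ((-(6 * (Es + Eφ))) * z + (3 * (Ls + Lφ + l * (Es + Eφ))) * z ^ 2 +
          (-(2 * (l * Lφ))) * z ^ 3) / (6 - 6 * l * z))
      ((((-(6 * (Es + Eφ))) + (3 * (Ls + Lφ + l * (Es + Eφ))) * (2 * z) +
            (-(2 * (l * Lφ))) * (3 * z ^ 2)) * (6 - 6 * l * z) -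
          ((-(6 * (Es + Eφ))) * z + (3 * (Ls + Lφ + l * (Es + Eφ))) * z ^ 2 +
            (-(2 * (l * Lφ))) * z ^ 3) * (-(6 * l))) / (6 - 6 * l * z) ^ 2) z := by
    intro z hz
    exact hd_aux _ _ _ _ _ (h6 z hz)
  have hODEF : ∀ z ∈ I,
      deriv (fun z : ℝ =>
        ((-(6 * (Es + Eφ))) * z + (3 * (Ls + Lφ + l * (Es + Eφ))) * z ^ 2 +
          (-(2 * (l * Lφ))) * z ^ 3) / (6 - 6 * l * z)) z -
        l * (((-(6 * (Es + Eφ))) * z + (3 * (Ls + Lφ + l * (Es + Eφ))) * z ^ 2 +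
          (-(2 * (l * Lφ))) * z ^ 3) / (6 - 6 * l * z)) / (1 - l * z)
        = -(Es + Eφ) + Lφ * z + Ls * z / (1 - l * z) := by
    intro z hz
    rw [(hFd z hz).deriv]
    have hz1 := h1ne z hz
    have hz6 := h6 z hz
    field_simp
    ring
  refine ⟨⟨by norm_num, hODEF⟩, ?_⟩
  intro Z₁ hdiff hZ0 hODE z hz
  set Fe : ℝ → ℝ := fun z : ℝ =>
      ((-(6 * (Es + Eφ))) * z + (3 * (Ls + Lφ + l * (Es + Eφ))) * z ^ 2 +
        (-(2 * (l * Lφ))) * z ^ 3) / (6 - 6 * l * z) with hFe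
  set g : ℝ → ℝ := fun z => (Z₁ z - Fe z) * (1 - l * z) with hg
  have hgd : ∀ x ∈ I, HasDerivWithinAt g 0 I x := by
    intro x hx
    have hZd : HasDerivAt Z₁ (deriv Z₁ x) x := (hdiff x).hasDerivAt
    have hFdx := hFd x hx
    have hden : HasDerivAt (fun z : ℝ => 1 - l * z) (-l) x := by
      have := (hasDerivAt_const x (1 : ℝ)).sub ((hasDerivAt_id x).const_mul l)
      refine this.congr_deriv ?_; ring
    have hmul := (hZd.sub hFdx).mul hden
    have hx1 := h1ne x hx
    have hdF : deriv Z₁ x - (((-(6 * (Es + Eφ))) + (3 * (Ls + Lφ + l * (Es + Eφ))) * (2 * x) +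
          (-(2 * (l * Lφ))) * (3 * x ^ 2)) * (6 - 6 * l * x) -
        ((-(6 * (Es + Eφ))) * x + (3 * (Ls + Lφ + l * (Es + Eφ))) * x ^ 2 +
          (-(2 * (l * Lφ))) * x ^ 3) * (-(6 * l))) / (6 - 6 * l * x) ^ 2
        = l * (Z₁ x - Fe x) / (1 - l * x) := by
      have e1 := hODE x hx
      have e2 := hODEF x hx
      have h3 : deriv Fe x = (((-(6 * (Es + Eφ))) + (3 * (Ls + Lφ + l * (Es + Eφ))) * (2 * x) +
          (-(2 * (l * Lφ))) * (3 * x ^ 2)) * (6 - 6 * l * x) -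
        ((-(6 * (Es + Eφ))) * x + (3 * (Ls + Lφ + l * (Es + Eφ))) * x ^ 2 +
          (-(2 * (l * Lφ))) * x ^ 3) * (-(6 * l))) / (6 - 6 * l * x) ^ 2 := hFdx.deriv
      rw [← h3]
      have e2' : deriv Fe x - l * Fe x / (1 - l * x)
          = -(Es + Eφ) + Lφ * x + Ls * x / (1 - l * x) := e2
      have h4 : deriv Z₁ x - deriv Fe x = l * Z₁ x / (1 - l * x) - l * Fe x / (1 - l * x) := by
        linarith [e1, e2']
      rw [h4]
      field_simp
    rw [hdF] at hmul
    have hzero : l * (Z₁ x - Fe x) / (1 - l * x) * (1 - l * x) + (Z₁ x - Fe x) * -l = 0 := by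
      field_simp
      ring
    rw [Pi.sub_apply, hzero] at hmul
    exact hmul.hasDerivWithinAt
  have hconv : Convex ℝ I := hI.convex
  have hbound : ∀ x ∈ I, ‖(fun _ : ℝ => (0:ℝ)) x‖ ≤ 0 := by intro x _; simp
  have hle := hconv.norm_image_sub_le_of_norm_hasDerivWithin_le
      (f := g) (f' := fun _ => 0) (fun x hx => hgd x hx) hbound h0 hz
  have hg0 : g 0 = 0 := by simp [hg, hFe, hZ0]
  have hgz : g z = 0 := by
    have : ‖g z - g 0‖ ≤ 0 := by simpa using hle
    have h' : g z - g 0 = 0 := by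
      have := norm_le_zero_iff.mp this
      exact this
    rw [hg0] at h'; simpa using h'
  have hx1 := h1ne z hz
  have := mul_eq_zero.mp hgz
  rcases this with h | h
  · exact sub_eq_zero.mp h
  · exact absurd h hx1
end
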